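/- arXiv:1405.4718 — 2 statements merged into one kernel-verified Lean document; each statement's English description precedes it below -/
import Mathlib

section
/- Let λ, μ ∈ ℚⁿ be nonnegative rational vectors that interlace: λ_1 ≥ μ_1 ≥ λ_2 ≥ μ_2 ≥ … ≥ λ_n ≥ μ_n ≥ 0, and let t ∈ ℚ with μ_1+…+μ_n ≤ t ≤ λ_1+…+λ_n. Then there exists ν ∈ ℚⁿ with λ interlacing ν and ν interlacing μ (λ_1 ≥ ν_1 ≥ λ_2 ≥ … and ν_1 ≥ μ_1 ≥ ν_2 ≥ …), ν_1+…+ν_n = t, and with the following tile-preservation property: for all i, j, if the positions of λ_i and μ_j lie in the same tile of the two-row pattern (λ; μ), then they lie in the same tile of the three-row pattern (λ; ν; μ). Here, the tiles of the two-row pattern are the classes of the equivalence relation on positions generated by: λ_i ∼ μ_i whenever λ_i = μ_i, and μ_i ∼ λ_{i+1} whenever μ_i = λ_{i+1}; the tiles of the three-row pattern are generated by: λ_i ∼ ν_i whenever λ_i = ν_i, ν_i ∼ λ_{i+1} whenever ν_i = λ_{i+1}, ν_i ∼ μ_i whenever ν_i = μ_i, and μ_i ∼ ν_{i+1} whenever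 μ_i = ν_{i+1}. -/
/-!
Take `ν_i = max μ_i (min λ_i s)`, the level `s` clamped into `[μ_i, λ_i]`. Such a row lies
between `μ` and `λ` entrywise, so it interlaces with both. Its sum is a nondecreasing function
of `s`, equal to `|μ|` far left and `|λ|` far right, and affine between consecutive entries of
`λ` and `μ`; solving the affine equation on the right gap gives a rational `s` with `|ν| = t`.
Tiles survive because clamping to a common level cannot separate a tie: if `μ_k = λ_{k+1}`,
then either `s ≤ μ_k` and `ν_k = μ_k`, or `s ≥ λ_{k+1}` and `ν_{k+1} = λ_{k+1}`.
-/

open Finset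

/-- `a` interlaces `b`: `a_1 ≥ b_1 ≥ a_2 ≥ b_2 ≥ … ≥ a_n ≥ b_n`. -/
def Interlaces {n : ℕ} (a b : Fin n → ℚ) : Prop :=
  (∀ i, b i ≤ a i) ∧
  ∀ (i : Fin n) (h : (i : ℕ) + 1 < n), a ⟨(i : ℕ) + 1, h⟩ ≤ b i

/-- Adjacency-with-equality for a two-row pattern with top row `λ` (row `1`)
and bottom row `μ` (row `0`): `λ_i ∼ μ_i` when `λ_i = μ_i`, and
`μ_i ∼ λ_{i+1}` when `μ_i = λ_{i+1}`. Its reflexive-symmetric-transitive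
closure has the tiles of the pattern as equivalence classes. -/
def adjTwo {n : ℕ} (lam mu : Fin n → ℚ) :
    Fin 2 × Fin n → Fin 2 × Fin n → Prop := fun p q =>
  (∃ i : Fin n, lam i = mu i ∧ p = (1, i) ∧ q = (0, i)) ∨
  (∃ (i : Fin n) (h : (i : ℕ) + 1 < n), mu i = lam ⟨(i : ℕ) + 1, h⟩ ∧
    p = (0, i) ∧ q = (1, ⟨(i : ℕ) + 1, h⟩))

/-- Adjacency-with-equality for a three-row pattern with top row `λ` (row `2`),
middle row `ν` (row `1`) and bottom row `μ` (row `0`). -/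
def adjThree {n : ℕ} (lam nu mu : Fin n → ℚ) :
    Fin 3 × Fin n → Fin 3 × Fin n → Prop := fun p q =>
  (∃ i : Fin n, lam i = nu i ∧ p = (2, i) ∧ q = (1, i)) ∨
  (∃ (i : Fin n) (h : (i : ℕ) + 1 < n), nu i = lam ⟨(i : ℕ) + 1, h⟩ ∧
    p = (1, i) ∧ q = (2, ⟨(i : ℕ) + 1, h⟩)) ∨
  (∃ i : Fin n, nu i = mu i ∧ p = (1, i) ∧ q = (0, i)) ∨
  (∃ (i : Fin n) (h : (i : ℕ) + 1 < n), mu i = nu ⟨(i : ℕ) + 1, h⟩ ∧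
    p = (0, i) ∧ q = (1, ⟨(i : ℕ) + 1, h⟩))

theorem max_min_eq_left_or_eq_right {α : Type*} [LinearOrder α] {a b c d : α} (s : α)
    (hcd : c ≤ d) (had : a = d) :
    max a (min b s) = a ∨ max c (min d s) = d := by
  rcases le_total s a with hs | hs
  · exact Or.inl (max_eq_left ((min_le_right b s).trans hs))
  · rw [had] at hs
    exact Or.inr (by rw [min_eq_left hs, max_eq_right hcd])

section Clamp

variable {K : Type*} [Field K] [LinearOrder K] [IsStrictOrderedRing K]

theorem max_min_add_mul_sub {a b x y θ : K} (hxy : x ≤ y) (hθ₀ : 0 ≤ θ) (hθ₁ : θ ≤ 1)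
    (ha : a ≤ x ∨ y ≤ a) (hb : b ≤ x ∨ y ≤ b) :
    max a (min b (x + θ * (y - x))) =
      max a (min b x) + θ * (max a (min b y) - max a (min b x)) := by
  have hxz : x ≤ x + θ * (y - x) := le_add_of_nonneg_right (mul_nonneg hθ₀ (sub_nonneg.2 hxy))
  have hzy : x + θ * (y - x) ≤ y := by nlinarith
  rcases hb with hb | hb
  · rw [min_eq_left hb, min_eq_left (hb.trans hxz), min_eq_left (hb.trans hxy)]
    ring
  rw [min_eq_right (hzy.trans hb), min_eq_right (hxy.trans hb), min_eq_right hb]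
  rcases ha with ha | ha
  · rw [max_eq_right ha, max_eq_right (ha.trans hxz), max_eq_right (ha.trans hxy)]
  · rw [max_eq_left ha, max_eq_left (hzy.trans ha), max_eq_left (hxy.trans ha)]
    ring

variable {ι : Type*} [Fintype ι]

theorem sum_max_min_add_mul_sub (a b : ι → K) {x y θ : K} (hxy : x ≤ y) (hθ₀ : 0 ≤ θ)
    (hθ₁ : θ ≤ 1) (hgap : ∀ c ∈ univ.image a ∪ univ.image b, c ≤ x ∨ y ≤ c) :
    ∑ i, max (a i) (min (b i) (x + θ * (y - x))) =
      ∑ i, max (a i) (min (b i) x) +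
        θ * (∑ i, max (a i) (min (b i) y) - ∑ i, max (a i) (min (b i) x)) := by
  rw [← sum_sub_distrib, mul_sum, ← sum_add_distrib]
  refine sum_congr rfl fun i _ => max_min_add_mul_sub hxy hθ₀ hθ₁ ?_ ?_
  · exact hgap _ (by simp)
  · exact hgap _ (by simp)

theorem exists_sum_max_min_eq (a b : ι → K) (hab : ∀ i, a i ≤ b i) {t : K}
    (ht₁ : ∑ i, a i ≤ t) (ht₂ : t ≤ ∑ i, b i) :
    ∃ s, ∑ i, max (a i) (min (b i) s) = t := by
  rcases isEmpty_or_nonempty ι with hι | ⟨⟨i₀⟩⟩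
  · simp only [univ_eq_empty, sum_empty] at ht₁ ht₂ ⊢
    exact ⟨0, le_antisymm ht₁ ht₂⟩
  set f : K → K := fun s => ∑ i, max (a i) (min (b i) s)
  set B := univ.image a ∪ univ.image b
  have ha_mem : ∀ i, a i ∈ B := fun i => mem_union_left _ (mem_image_of_mem a (mem_univ i))
  have hb_mem : ∀ i, b i ∈ B := fun i => mem_union_right _ (mem_image_of_mem b (mem_univ i))
  have hBne : B.Nonempty := ⟨a i₀, ha_mem i₀⟩
  have hf_min : f (B.min' hBne) = ∑ i, a i := sum_congr rfl fun i _ => by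
    rw [min_eq_right ((B.min'_le _ (ha_mem i)).trans (hab i)),
      max_eq_left (B.min'_le _ (ha_mem i))]
  set L := B.filter (f · ≤ t)
  have hLne : L.Nonempty := ⟨B.min' hBne, mem_filter.2 ⟨B.min'_mem hBne, hf_min ▸ ht₁⟩⟩
  set x := L.max' hLne
  obtain ⟨hxB, hfx⟩ := mem_filter.1 (L.max'_mem hLne)
  by_cases hx_top : ∀ i, b i ≤ x
  · refine ⟨x, le_antisymm hfx (ht₂.trans_eq (sum_congr rfl fun i _ => ?_))⟩
    rw [min_eq_left (hx_top i), max_eq_right (hab i)]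
  push Not at hx_top
  obtain ⟨i₁, hi₁⟩ := hx_top
  -- `x < y` are consecutive breakpoints with `f x ≤ t < f y`, and `f` is affine between them
  set U := B.filter (x < ·)
  have hUne : U.Nonempty := ⟨b i₁, mem_filter.2 ⟨hb_mem i₁, hi₁⟩⟩
  set y := U.min' hUne
  obtain ⟨hyB, hxy⟩ := mem_filter.1 (U.min'_mem hUne)
  have hfy : t < f y := lt_of_not_ge fun h => (L.le_max' y (mem_filter.2 ⟨hyB, h⟩)).not_gt hxy
  have hgap : ∀ c ∈ B, c ≤ x ∨ y ≤ c := fun c hc =>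
    (le_or_gt c x).imp_right fun hxc => U.min'_le c (mem_filter.2 ⟨hc, hxc⟩)
  have hpos : 0 < f y - f x := by linarith
  refine ⟨x + (t - f x) / (f y - f x) * (y - x), ?_⟩
  rw [sum_max_min_add_mul_sub a b hxy.le (div_nonneg (by linarith) hpos.le)
    ((div_le_one hpos).2 (by linarith)) hgap]
  change f x + (t - f x) / (f y - f x) * (f y - f x) = t
  rw [div_mul_cancel₀ _ hpos.ne']
  ring

end Clamp

theorem Interlaces.left_of_le {n : ℕ} {lam nu mu : Fin n → ℚ} (h : Interlaces lam mu)
    (hmu : ∀ i, mu i ≤ nu i) (hlam : ∀ i, nu i ≤ lam i) : Interlaces lam nu :=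
  ⟨hlam, fun i hi => (h.2 i hi).trans (hmu i)⟩

theorem Interlaces.right_of_le {n : ℕ} {lam nu mu : Fin n → ℚ} (h : Interlaces lam mu)
    (hmu : ∀ i, mu i ≤ nu i) (hlam : ∀ i, nu i ≤ lam i) : Interlaces nu mu :=
  ⟨hmu, fun i hi => (hlam _).trans (h.2 i hi)⟩

/-- Rows `1` (`λ`) and `0` (`μ`) of the two-row pattern are rows `2` and `0` of the three-row
one. -/
def outerRows {n : ℕ} (p : Fin 2 × Fin n) : Fin 3 × Fin n := (![0, 2] p.1, p.2)

open Relation in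
theorem eqvGen_adjThree_outerRows_of_adjTwo {n : ℕ} {lam nu mu : Fin n → ℚ}
    (hmu : ∀ i, mu i ≤ nu i) (hlam : ∀ i, nu i ≤ lam i)
    (hsplit : ∀ (k : Fin n) (h : (k : ℕ) + 1 < n), mu k = lam ⟨k + 1, h⟩ →
      nu k = mu k ∨ nu ⟨k + 1, h⟩ = lam ⟨k + 1, h⟩)
    {p q : Fin 2 × Fin n} (hpq : adjTwo lam mu p q) :
    EqvGen (adjThree lam nu mu) (outerRows p) (outerRows q) := by
  rcases hpq with ⟨k, hk, rfl, rfl⟩ | ⟨k, hk₁, hk, rfl, rfl⟩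
  · have hnu : nu k = mu k := le_antisymm (hk ▸ hlam k) (hmu k)
    exact .trans _ (1, k) _ (.rel _ _ (Or.inl ⟨k, hk.trans hnu.symm, rfl, rfl⟩))
      (.rel _ _ (Or.inr (Or.inr (Or.inl ⟨k, hnu, rfl, rfl⟩))))
  rcases hsplit k hk₁ hk with hnu | hnu
  · exact .trans _ (1, k) _
      (.symm _ _ (.rel _ _ (Or.inr (Or.inr (Or.inl ⟨k, hnu, rfl, rfl⟩)))))
      (.rel _ _ (Or.inr (Or.inl ⟨k, hk₁, hnu.trans hk, rfl, rfl⟩)))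
  · exact .trans _ (1, ⟨k + 1, hk₁⟩) _
      (.rel _ _ (Or.inr (Or.inr (Or.inr ⟨k, hk₁, hk.trans hnu.symm, rfl, rfl⟩))))
      (.symm _ _ (.rel _ _ (Or.inl ⟨_, hnu.symm, rfl, rfl⟩)))

theorem statement17_general (n : ℕ) (lam mu : Fin n → ℚ)
    (hint : Interlaces lam mu)
    (t : ℚ) (ht1 : ∑ i, mu i ≤ t) (ht2 : t ≤ ∑ i, lam i) :
    ∃ nu : Fin n → ℚ, Interlaces lam nu ∧ Interlaces nu mu ∧
      (∑ i, nu i = t) ∧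
      ∀ i j : Fin n, Relation.EqvGen (adjTwo lam mu) (1, i) (0, j) →
        Relation.EqvGen (adjThree lam nu mu) (2, i) (0, j) := by
  obtain ⟨s, hs⟩ := exists_sum_max_min_eq mu lam hint.1 ht1 ht2
  set nu : Fin n → ℚ := fun i => max (mu i) (min (lam i) s)
  have hmu : ∀ i, mu i ≤ nu i := fun i => le_max_left _ _
  have hlam : ∀ i, nu i ≤ lam i := fun i => max_le (hint.1 i) (min_le_left _ _)
  refine ⟨nu, hint.left_of_le hmu hlam, hint.right_of_le hmu hlam, hs, fun i j hij => ?_⟩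
  have hsplit (k : Fin n) (h : (k : ℕ) + 1 < n) (hk : mu k = lam ⟨k + 1, h⟩) :
      nu k = mu k ∨ nu ⟨k + 1, h⟩ = lam ⟨k + 1, h⟩ :=
    max_min_eq_left_or_eq_right s (hint.1 _) hk
  -- the tile relation of `(λ; ν; μ)` pulled back along `outerRows` is an equivalence
  -- containing `adjTwo lam mu`
  exact (Setoid.eqvGen_le (s := (Relation.EqvGen.setoid _).comap outerRows)
    fun _ _ => eqvGen_adjThree_outerRows_of_adjTwo hmu hlam hsplit) hij

/-- Given interlacing nonnegative rational rows `λ ≥_int μ` and a rational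
`|μ| ≤ t ≤ |λ|`, there is a middle row `ν` with `λ ≥_int ν ≥_int μ`, `|ν| = t`,
such that entries `λ_i` and `μ_j` lying in the same tile of the two-row
pattern `(λ; μ)` lie in the same tile of the three-row pattern `(λ; ν; μ)`. -/
theorem statement17 (n : ℕ) (hn : 1 ≤ n) (lam mu : Fin n → ℚ)
    (hlam0 : ∀ i, 0 ≤ lam i) (hmu0 : ∀ i, 0 ≤ mu i)
    (hint : Interlaces lam mu)
    (t : ℚ) (ht1 : ∑ i, mu i ≤ t) (ht2 : t ≤ ∑ i, lam i) :
    ∃ nu : Fin n → ℚ, Interlaces lam nu ∧ Interlaces nu mu ∧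
      (∑ i, nu i = t) ∧
      ∀ i j : Fin n, Relation.EqvGen (adjTwo lam mu) (1, i) (0, j) →
        Relation.EqvGen (adjThree lam nu mu) (2, i) (0, j) :=
  statement17_general n lam mu hint t ht1 ht2
end

section
/- Fix m ≥ 1 and weakly decreasing nonnegative integer vectors λ, μ ∈ ℤⁿ with λ_i ≥ μ_i for all i. Let Q_{λ/μ} be the set of all real m×n matrices x = (x^i_j) satisfying x^{i+1}_j ≥ x^i_j for 1 ≤ i < m, 1 ≤ j ≤ n, x^i_j ≥ x^{i+1}_{j+1} for 1 ≤ i < m, 1 ≤ j < n, x^1 = μ and x^m = λ (the Gelfand–Tsetlin polytope without weight restriction). Then Q_{λ/μ} has the integer decomposition property: for every integer k ≥ 1, every point of Q_{kλ/kμ} with all entries in ℤ is an entrywise sum of k points of Q_{λ/μ} with all entries in ℤ. -/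
/-!
Slice an integral point `x` of `Q_{kλ/kμ}` into the `k` arrays `y_t = ⌊(x + t) / k⌋`,
`0 ≤ t < k`. Each `y_t` is obtained from `x` by applying one and the same monotone map
to every entry, so it satisfies the Gelfand–Tsetlin inequalities; on the boundary rows
`⌊(k a + t) / k⌋ = a`, so `y_t ∈ Q_{λ/μ}`; and Hermite's identity
`∑_{t<k} ⌊(z + t) / k⌋ = z` shows that the slices add up to `x`.
-/

open Finset

/-- A real `(m+1) × n` array satisfying the Gelfand–Tsetlin inequalities:
rows increase upwards along columns, and down-right diagonals decrease.
Row `0` is the bottom row, row `m` the top row. -/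
def IsGTPattern (m n : ℕ) (x : Fin (m + 1) → Fin n → ℝ) : Prop :=
  (∀ (i : Fin m) (j : Fin n), x i.castSucc j ≤ x i.succ j) ∧
  (∀ (i : Fin m) (j : Fin n) (h : (j : ℕ) + 1 < n),
    x i.succ ⟨(j : ℕ) + 1, h⟩ ≤ x i.castSucc j)

/-- The Gelfand–Tsetlin polytope `Q_{λ/μ}` without weight restriction:
row `0` is `μ` and row `m` is `λ`. -/
def gtFreePolytope (m n : ℕ) (lam mu : Fin n → ℤ) :
    Set (Fin (m + 1) → Fin n → ℝ) :=
  {x | IsGTPattern m n x ∧ (∀ j, x 0 j = (mu j : ℝ)) ∧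
    ∀ j, x (Fin.last m) j = (lam j : ℝ)}

theorem Int.sum_range_add_ediv {k : ℕ} (hk : 0 < k) (z : ℤ) :
    ∑ t ∈ Finset.range k, (z + t) / k = z := by
  have hk' : (k : ℤ) ≠ 0 := by exact_mod_cast hk.ne'
  -- shifting `z` by one trades the term `z / k` for `(z + k) / k = z / k + 1`
  have step (z : ℤ) :
      ∑ t ∈ Finset.range k, (z + 1 + t) / k = ∑ t ∈ Finset.range k, (z + t) / k + 1 := by
    have h := (sum_range_succ' (fun t => (z + t) / (k : ℤ)) k).symm.trans
      (sum_range_succ (fun t => (z + t) / (k : ℤ)) k)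
    have hlast : (z + k) / (k : ℤ) = z / k + 1 := by simpa using Int.add_mul_ediv_right z 1 hk'
    push_cast at h
    rw [hlast, add_zero] at h
    simp only [← add_assoc] at h
    simp only [add_right_comm z 1]
    linarith
  induction z using Int.induction_on with
  | zero =>
    exact sum_eq_zero fun t ht => Int.ediv_eq_zero_of_lt (by positivity) (by simpa using ht)
  | succ z ih => rw [step, ih]
  | pred z ih =>
    have h := step (-z - 1)
    rw [sub_add_cancel, ih] at h
    linarith

section FloorRing

variable {K : Type*} [Field K] [LinearOrder K] [IsStrictOrderedRing K] [FloorRing K]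

theorem Int.sum_range_floor_add_div {k : ℕ} (hk : 0 < k) (r : K) :
    ∑ t ∈ Finset.range k, ⌊(r + t) / k⌋ = ⌊r⌋ := by
  simp only [Int.floor_div_natCast, Int.floor_add_natCast]
  exact_mod_cast Int.sum_range_add_ediv hk ⌊r⌋

theorem Int.floor_mul_add_div {k t : ℕ} (htk : t < k) (a : ℤ) :
    ⌊((k : K) * a + t) / k⌋ = a := by
  have hk : (k : ℤ) ≠ 0 := by omega
  have hcast : (k : K) * a + t = ((k * a + t : ℤ) : K) := by push_cast; ring
  rw [Int.floor_div_natCast, hcast, Int.floor_intCast, Int.mul_add_ediv_left _ _ hk,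
    Int.ediv_eq_zero_of_lt (by positivity) (by exact_mod_cast htk), add_zero]

end FloorRing

theorem IsGTPattern.comp_monotone {m n : ℕ} {x : Fin (m + 1) → Fin n → ℝ} {f : ℝ → ℝ}
    (hx : IsGTPattern m n x) (hf : Monotone f) : IsGTPattern m n fun i j => f (x i j) :=
  ⟨fun i j => hf (hx.1 i j), fun i j h => hf (hx.2 i j h)⟩

theorem statement18_general (m n : ℕ) (lam mu : Fin n → ℤ)
    (k : ℕ) (hk : 1 ≤ k)
    (x : Fin (m + 1) → Fin n → ℝ)
    (hx : x ∈ gtFreePolytope m n (fun j => (k : ℤ) * lam j) fun j => (k : ℤ) * mu j)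
    (hint : ∀ i j, ∃ z : ℤ, x i j = (z : ℝ)) :
    ∃ y : Fin k → Fin (m + 1) → Fin n → ℝ,
      (∀ t, y t ∈ gtFreePolytope m n lam mu) ∧
      (∀ t i j, ∃ z : ℤ, y t i j = (z : ℝ)) ∧
      ∀ i j, x i j = ∑ t, y t i j := by
  obtain ⟨hpattern, hbottom, htop⟩ := hx
  have hslice (t : Fin k) : Monotone fun r : ℝ => (⌊(r + t) / k⌋ : ℝ) :=
    Int.cast_mono.comp <| Int.floor_mono.comp <|
      (monotone_id.add_const _).div_const (Nat.cast_nonneg k)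
  refine ⟨fun t i j => ⌊(x i j + t) / k⌋, fun t => ⟨hpattern.comp_monotone (hslice t),
    fun j => ?_, fun j => ?_⟩, fun t i j => ⟨_, rfl⟩, fun i j => ?_⟩
  · simp only [hbottom, Int.cast_mul, Int.cast_natCast, Int.floor_mul_add_div t.isLt]
  · simp only [htop, Int.cast_mul, Int.cast_natCast, Int.floor_mul_add_div t.isLt]
  · obtain ⟨z, hz⟩ := hint i j
    rw [Fin.sum_univ_eq_sum_range (fun t => (⌊(x i j + t) / k⌋ : ℝ)), ← Int.cast_sum,
      Int.sum_range_floor_add_div hk, hz, Int.floor_intCast]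

/-- The weight-unrestricted GT-polytope `Q_{λ/μ}` has the integer
decomposition property: every integral point of `Q_{kλ/kμ}` is an entrywise
sum of `k` integral points of `Q_{λ/μ}`. -/
theorem statement18 (m n : ℕ) (hn : 1 ≤ n) (lam mu : Fin n → ℤ)
    (hlam : Antitone lam) (hmu : Antitone mu)
    (hmu0 : ∀ j, 0 ≤ mu j) (hge : ∀ j, mu j ≤ lam j)
    (k : ℕ) (hk : 1 ≤ k)
    (x : Fin (m + 1) → Fin n → ℝ)
    (hx : x ∈ gtFreePolytope m n (fun j => (k : ℤ) * lam j) fun j => (k : ℤ) * mu j)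
    (hint : ∀ i j, ∃ z : ℤ, x i j = (z : ℝ)) :
    ∃ y : Fin k → Fin (m + 1) → Fin n → ℝ,
      (∀ t, y t ∈ gtFreePolytope m n lam mu) ∧
      (∀ t i j, ∃ z : ℤ, y t i j = (z : ℝ)) ∧
      ∀ i j, x i j = ∑ t, y t i j :=
  statement18_general m n lam mu k hk x hx hint
end
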